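/- For a1 = a2 = a3 = 1/4, every triple of positive reals (x1, x2, x3) satisfying system (S) has x1 = x2 = x3; i.e., the positive solutions of (S) are exactly the triples (q, q, q) with q > 0. -/
import Mathlib


noncomputable section
open Real Set

/-- First equation of system (S). -/
def eqS1 (a1 a2 a3 x1 x2 x3 : ℝ) : Prop :=
  (a2 + a3)*(a1*x2^2 + a1*x3^2 - x2*x3) + (a2*x2 + a3*x3)*x1
    - (a1*a2 + a1*a3 + 2*a2*a3)*x1^2 = 0

/-- Second equation of system (S). -/
def eqS2 (a1 a2 a3 x1 x2 x3 : ℝ) : Prop :=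
  (a1 + a3)*(a2*x1^2 + a2*x3^2 - x1*x3) + (a1*x1 + a3*x3)*x2
    - (a1*a2 + 2*a1*a3 + a2*a3)*x2^2 = 0

theorem quarter_case_unique_solution (x1 x2 x3 : ℝ)
    (hx1 : 0 < x1) (hx2 : 0 < x2) (hx3 : 0 < x3) :
    (eqS1 (1/4) (1/4) (1/4) x1 x2 x3 ∧ eqS2 (1/4) (1/4) (1/4) x1 x2 x3) ↔
      ∃ q : ℝ, 0 < q ∧ x1 = q ∧ x2 = q ∧ x3 = q := by
  unfold eqS1 eqS2
  constructor
  · rintro ⟨h1, h2⟩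
    have key : (x2 - x1) * (x1 + x2 - 2*x3) = 0 := by
      linear_combination (8/3)*h1 - (8/3)*h2
    rcases mul_eq_zero.mp key with hk | hk
    · have h12 : x2 = x1 := by linarith [sub_eq_zero.mp hk]
      subst h12
      have h13 : (x2 - x3)^2 = 0 := by
        linear_combination 8*h1
      have h13' : x2 = x3 := by
        have := pow_eq_zero_iff (n := 2) (by norm_num) |>.mp h13
        linarith
      exact ⟨x2, hx2, rfl, rfl, h13'.symm⟩
    · have h3 : x3 = (x1 + x2)/2 := by linarith
      have hsq : (x1 - x2)^2 = 0 := by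
        subst h3; linear_combination (-32/3)*h1
      have h12 : x1 = x2 := by
        have := pow_eq_zero_iff (n := 2) (by norm_num) |>.mp hsq
        linarith
      refine ⟨x1, hx1, rfl, h12.symm, ?_⟩
      subst h3; linarith
  · rintro ⟨q, hq, rfl, rfl, rfl⟩
    constructor <;> ring
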